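/- arXiv:1908.05610 — 2 statements merged into one kernel-verified Lean document; each statement's English description precedes it below -/
import Mathlib

section
/- A closed curve in ℝ² that has winding number 1 around each of four points placed at the vertices of a square of side 2, and stays at distance ≥ 1 from all four vertices, has length at least 2π + 8. -/
open Set Complex
open MeasureTheory
open scoped InnerProductSpace

/-- The curve `γ`, restricted to `[0,1]`, winds once (counterclockwise) around `p`. -/
def WindsOnce (γ : ℝ → ℂ) (p : ℂ) : Prop :=
  ∃ θ r : ℝ → ℝ, ContinuousOn θ (Icc 0 1) ∧ ContinuousOn r (Icc 0 1) ∧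
    (∀ t ∈ Icc (0:ℝ) 1, 0 < r t ∧ γ t - p = r t * Complex.exp (θ t * Complex.I)) ∧
    θ 1 = θ 0 + 2 * Real.pi

/-- The vertices of a square of side length `2` in `ℝ² = ℂ`. -/
noncomputable def squareVertices : Fin 4 → ℂ := ![0, 2, 2 + 2 * Complex.I, 2 * Complex.I]

/-! Cauchy–Crofton: since `∫₀^{2π} |⟪z, e^{iφ}⟫| dφ = 4‖z‖`, four times the length of `γ` is
the integral over the directions `w = e^{iφ}` of the variation of `⟪γ, w⟫`. A closed curve crosses
its width in direction `w` at least twice. Because `γ` winds around each vertex while staying at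
distance `≥ 1` from it, it meets every ray from a vertex at distance `≥ 1`, so that width is at
least the square's width `|⟪2, w⟫| + |⟪2i, w⟫|` plus `2`; integrating gives
`4 · length γ ≥ 2 · (16 + 4π)`. To use one partition for all directions at once, the curve is
sampled on a uniform grid made fine by uniform continuity. -/

noncomputable def unitGrid (N k : ℕ) : ℝ := k / N

lemma unitGrid_mem_Icc {N k : ℕ} (hk : k ≤ N) : unitGrid N k ∈ Icc (0 : ℝ) 1 :=
  ⟨by unfold unitGrid; positivity, div_le_one_of_le₀ (by exact_mod_cast hk) N.cast_nonneg⟩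

lemma unitGrid_zero (N : ℕ) : unitGrid N 0 = 0 := by simp [unitGrid]

lemma unitGrid_self {N : ℕ} (hN : 0 < N) : unitGrid N N = 1 :=
  div_self (Nat.cast_ne_zero.mpr hN.ne')

lemma monotone_unitGrid (N : ℕ) : Monotone (unitGrid N) := fun _ _ h =>
  div_le_div_of_nonneg_right (Nat.cast_le.mpr h) N.cast_nonneg

lemma ContinuousOn.exists_unitGrid_dist_lt {α : Type*} [PseudoMetricSpace α] {f : ℝ → α}
    (hf : ContinuousOn f (Icc 0 1)) {ε : ℝ} (hε : 0 < ε) :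
    ∃ N : ℕ, 0 < N ∧ ∀ t ∈ Icc (0 : ℝ) 1, ∃ k ≤ N, dist (f t) (f (unitGrid N k)) < ε := by
  obtain ⟨δ, hδ, hf⟩ :=
    Metric.uniformContinuousOn_iff.mp (isCompact_Icc.uniformContinuousOn_of_continuous hf) ε hε
  obtain ⟨N, hN⟩ := exists_nat_one_div_lt hδ
  set M := N + 1
  have hM : (0 : ℝ) < M := by positivity
  have hM1 : (1 : ℝ) / M < δ := by simpa [M] using hN
  refine ⟨M, N.succ_pos, fun t ht => ?_⟩
  set k := ⌊t * M⌋₊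
  have hkM : k ≤ M := Nat.floor_le_of_le (by simpa using mul_le_of_le_one_left hM.le ht.2)
  have hk : (k : ℝ) / M ≤ t := (div_le_iff₀ hM).2 (Nat.floor_le (mul_nonneg ht.1 hM.le))
  have hk' : t < k / M + 1 / M := by
    rw [← add_div, lt_div_iff₀ hM]; exact Nat.lt_floor_add_one _
  refine ⟨k, hkM, hf t ht _ (unitGrid_mem_Icc hkM) ?_⟩
  rw [Real.dist_eq, abs_sub_lt_iff, unitGrid]
  constructor <;> linarith

lemma sum_edist_unitGrid_le_eVariationOn {E : Type*} [PseudoEMetricSpace E] (f : ℝ → E)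
    (N : ℕ) :
    ∑ k ∈ Finset.range N, edist (f (unitGrid N k)) (f (unitGrid N (k + 1))) ≤
      eVariationOn f (Icc 0 1) := by
  rw [Finset.sum_congr rfl fun k _ => edist_comm _ _, Finset.range_eq_Ico]
  exact eVariationOn.sum_le_of_monotoneOn_Icc ((monotone_unitGrid N).monotoneOn _)
    fun k hk => unitGrid_mem_Icc hk.2

lemma two_mul_dist_le_sum_dist {α : Type*} [PseudoMetricSpace α] {g : ℕ → α} {N : ℕ}
    (hg : g 0 = g N) {i j : ℕ} (hi : i ≤ N) (hj : j ≤ N) :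
    2 * dist (g i) (g j) ≤ ∑ k ∈ Finset.range N, dist (g k) (g (k + 1)) := by
  wlog hij : i ≤ j generalizing i j
  · rw [dist_comm]; exact this hj hi (le_of_not_ge hij)
  have hout : dist (g i) (g j) ≤ dist (g 0) (g i) + dist (g j) (g N) := by
    rw [hg, dist_comm (g N)]; exact dist_triangle_right _ _ _
  rw [Finset.range_eq_Ico, ← Finset.sum_Ico_consecutive _ (Nat.zero_le i) (hij.trans hj),
    ← Finset.sum_Ico_consecutive _ hij hj]
  linarith [dist_le_Ico_sum_dist g (Nat.zero_le i), dist_le_Ico_sum_dist g hij,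
    dist_le_Ico_sum_dist g hj]


lemma integral_abs_cos_sub (α : ℝ) :
    ∫ φ in 0..2 * Real.pi, |Real.cos (φ - α)| = 4 := by
  have hper : Function.Periodic (fun x => |Real.cos x|) Real.pi := fun x => by
    simp [Real.cos_add_pi]
  have hint : ∀ a b, IntervalIntegrable (fun x => |Real.cos x|) volume a b :=
    fun a b => by apply Continuous.intervalIntegrable; fun_prop
  have hcos : ∫ x in (-(Real.pi / 2))..(-(Real.pi / 2) + Real.pi), |Real.cos x| = 2 := by
    rw [intervalIntegral.integral_congr (g := Real.cos), integral_cos]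
    · norm_num
    · intro x hx
      rw [uIcc_of_le (by linarith [Real.pi_pos])] at hx
      exact abs_of_nonneg (Real.cos_nonneg_of_mem_Icc ⟨hx.1, by linarith [hx.2]⟩)
  rw [intervalIntegral.integral_comp_sub_right (fun x => |Real.cos x|),
    show 2 * Real.pi - α = -α + (2 : ℤ) • Real.pi by simp; ring, zero_sub,
    hper.intervalIntegral_add_zsmul_eq 2 _ hint, hper.intervalIntegral_add_eq _ (-(Real.pi / 2)),
    hcos]
  norm_num

lemma inner_exp_ofReal_mul_I_eq_norm_mul_cos (z : ℂ) (φ : ℝ) :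
    ⟪z, exp (φ * I)⟫_ℝ = ‖z‖ * Real.cos (φ - arg z) := by
  simp only [Complex.inner, mul_re, exp_ofReal_mul_I_re, conj_re, exp_ofReal_mul_I_im, conj_im,
    Real.cos_sub]
  linear_combination -Real.cos φ * norm_mul_cos_arg z - Real.sin φ * norm_mul_sin_arg z

lemma integral_abs_inner_exp_ofReal_mul_I (z : ℂ) :
    ∫ φ in 0..2 * Real.pi, |⟪z, exp (φ * I)⟫_ℝ| = 4 * ‖z‖ := by
  simp_rw [inner_exp_ofReal_mul_I_eq_norm_mul_cos, abs_mul, abs_norm,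
    intervalIntegral.integral_const_mul, integral_abs_cos_sub, mul_comm]

lemma WindsOnce.exists_sub_eq_ofReal_mul {γ : ℝ → ℂ} {p : ℂ} (h : WindsOnce γ p) {w : ℂ}
    (hw : ‖w‖ = 1) : ∃ t ∈ Icc (0 : ℝ) 1, ∃ r : ℝ, 0 < r ∧ γ t - p = r * w := by
  obtain ⟨θ, r, hθ, -, hpolar, hθ1⟩ := h
  set v := toIcoMod Real.two_pi_pos (θ 0) (arg w)
  have hv : v ∈ Icc (θ 0) (θ 1) := hθ1 ▸ Ico_subset_Icc_self (toIcoMod_mem_Ico _ _ _)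
  obtain ⟨t, ht, hθt⟩ := intermediate_value_Icc zero_le_one hθ hv
  have hexp : exp (v * I) = w := by
    obtain ⟨n, hn⟩ : ∃ n : ℤ, v = arg w - n * (2 * Real.pi) :=
      ⟨_, eq_sub_of_add_eq' (sub_eq_iff_eq_add.mp (self_sub_toIcoMod_eq_mul _ _ _)).symm⟩
    rw [hn, show ((arg w - n * (2 * Real.pi) : ℝ) : ℂ) * I = arg w * I - n * (2 * Real.pi * I) by
      push_cast; ring, exp_sub, exp_int_mul_two_pi_mul_I, div_one]
    simpa [hw] using norm_mul_exp_arg_mul_I w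
  exact ⟨t, ht, r t, (hpolar t ht).1, by rw [(hpolar t ht).2, hθt, hexp]⟩

lemma WindsOnce.exists_inner_ge {γ : ℝ → ℂ} {p : ℂ} (h : WindsOnce γ p) {ρ : ℝ}
    (hρ : ∀ t ∈ Icc (0 : ℝ) 1, ρ ≤ dist (γ t) p) {w : ℂ} (hw : ‖w‖ = 1) :
    ∃ t ∈ Icc (0 : ℝ) 1, ⟪p, w⟫_ℝ + ρ ≤ ⟪γ t, w⟫_ℝ := by
  obtain ⟨t, ht, r, hr, hγt⟩ := h.exists_sub_eq_ofReal_mul hw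
  have hdist : dist (γ t) p = r := by simp [dist_eq, hγt, hw, hr.le]
  have hinner : ⟪γ t - p, w⟫_ℝ = r := by
    rw [hγt, ← real_smul, real_inner_smul_left, real_inner_self_eq_norm_sq, hw]; ring
  refine ⟨t, ht, ?_⟩
  linarith [hρ t ht, inner_sub_left (𝕜 := ℝ) (γ t) p w]

lemma exists_squareVertices_inner_sub (w : ℂ) : ∃ k l : Fin 4,
    |⟪(2 : ℂ), w⟫_ℝ| + |⟪2 * I, w⟫_ℝ| = ⟪squareVertices k - squareVertices l, w⟫_ℝ := by
  rcases le_total 0 w.re with hre | hre <;> rcases le_total 0 w.im with him | him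
  · exact ⟨2, 0, by simp [Complex.inner, squareVertices, abs_of_nonneg, *]⟩
  · exact ⟨1, 3, by simp [Complex.inner, squareVertices, abs_of_nonneg, abs_of_nonpos, *]; ring⟩
  · exact ⟨3, 1, by simp [Complex.inner, squareVertices, abs_of_nonneg, abs_of_nonpos, *]⟩
  · exact ⟨0, 2, by simp [Complex.inner, squareVertices, abs_of_nonpos, *]; ring⟩

lemma exists_inner_sub_ge_of_windsOnce_squareVertices {γ : ℝ → ℂ}
    (hwind : ∀ i : Fin 4, WindsOnce γ (squareVertices i))
    (hdist : ∀ t ∈ Icc (0:ℝ) 1, ∀ i : Fin 4, 1 ≤ dist (γ t) (squareVertices i))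
    {w : ℂ} (hw : ‖w‖ = 1) : ∃ t ∈ Icc (0 : ℝ) 1, ∃ u ∈ Icc (0 : ℝ) 1,
      |⟪(2 : ℂ), w⟫_ℝ| + |⟪2 * I, w⟫_ℝ| + 2 ≤ ⟪γ t - γ u, w⟫_ℝ := by
  obtain ⟨k, l, hkl⟩ := exists_squareVertices_inner_sub w
  obtain ⟨t, ht, hk⟩ := (hwind k).exists_inner_ge (fun t ht => hdist t ht k) hw
  obtain ⟨u, hu, hl⟩ :=
    (hwind l).exists_inner_ge (fun t ht => hdist t ht l) (w := -w) (by rwa [norm_neg])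
  refine ⟨t, ht, u, hu, ?_⟩
  simp only [inner_neg_right, inner_sub_left] at hl hkl ⊢
  linarith

lemma two_mul_inner_sub_le_sum_abs_inner_unitGrid {E : Type*} [NormedAddCommGroup E]
    [InnerProductSpace ℝ E] {γ : ℝ → E} (hclosed : γ 0 = γ 1) {N : ℕ} (hN : 0 < N) {δ : ℝ}
    (hgrid : ∀ t ∈ Icc (0 : ℝ) 1, ∃ k ≤ N, dist (γ t) (γ (unitGrid N k)) < δ)
    {w : E} (hw : ‖w‖ ≤ 1) {t u : ℝ} (ht : t ∈ Icc (0 : ℝ) 1) (hu : u ∈ Icc (0 : ℝ) 1) :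
    2 * ⟪γ t - γ u, w⟫_ℝ - 4 * δ ≤
      ∑ k ∈ Finset.range N, |⟪γ (unitGrid N k) - γ (unitGrid N (k + 1)), w⟫_ℝ| := by
  obtain ⟨i, hi, hti⟩ := hgrid t ht
  obtain ⟨j, hj, huj⟩ := hgrid u hu
  have hproj : ∀ x y : E, ⟪x - y, w⟫_ℝ ≤ dist x y := fun x y =>
    ((real_inner_le_norm _ _).trans (mul_le_of_le_one_right (norm_nonneg _) hw)).trans_eq
      (dist_eq_norm x y).symm
  have hpoly := two_mul_dist_le_sum_dist (g := fun k => ⟪γ (unitGrid N k), w⟫_ℝ)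
    (by simp only [unitGrid_zero, unitGrid_self hN, hclosed]) hi hj
  simp only [Real.dist_eq, ← inner_sub_left] at hpoly
  have hsplit : ⟪γ t - γ u, w⟫_ℝ = ⟪γ t - γ (unitGrid N i), w⟫_ℝ +
      ⟪γ (unitGrid N i) - γ (unitGrid N j), w⟫_ℝ + ⟪γ (unitGrid N j) - γ u, w⟫_ℝ := by
    simp only [inner_sub_left]; ring
  linarith [hproj (γ t) (γ (unitGrid N i)), hproj (γ (unitGrid N j)) (γ u),
    dist_comm (γ u) (γ (unitGrid N j)), le_abs_self ⟪γ (unitGrid N i) - γ (unitGrid N j), w⟫_ℝ]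

lemma two_pi_add_eight_le_sum_dist_unitGrid {γ : ℝ → ℂ} (hclosed : γ 0 = γ 1)
    (hwind : ∀ i : Fin 4, WindsOnce γ (squareVertices i))
    (hdist : ∀ t ∈ Icc (0:ℝ) 1, ∀ i : Fin 4, 1 ≤ dist (γ t) (squareVertices i))
    {N : ℕ} (hN : 0 < N) {δ : ℝ}
    (hgrid : ∀ t ∈ Icc (0 : ℝ) 1, ∃ k ≤ N, dist (γ t) (γ (unitGrid N k)) < δ) :
    2 * Real.pi + 8 ≤
      ∑ k ∈ Finset.range N, dist (γ (unitGrid N k)) (γ (unitGrid N (k + 1))) +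
        2 * Real.pi * δ := by
  have hpoint : ∀ φ : ℝ,
      2 * (|⟪(2 : ℂ), exp (φ * I)⟫_ℝ| + |⟪2 * I, exp (φ * I)⟫_ℝ|) + (4 - 4 * δ) ≤
        ∑ k ∈ Finset.range N, |⟪γ (unitGrid N k) - γ (unitGrid N (k + 1)), exp (φ * I)⟫_ℝ| := by
    intro φ
    obtain ⟨t, ht, u, hu, hwidth⟩ :=
      exists_inner_sub_ge_of_windsOnce_squareVertices hwind hdist (norm_exp_ofReal_mul_I φ)
    linarith [two_mul_inner_sub_le_sum_abs_inner_unitGrid hclosed hN hgrid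
      (norm_exp_ofReal_mul_I φ).le ht hu]
  have hii : ∀ {f : ℝ → ℝ}, Continuous f → IntervalIntegrable f volume 0 (2 * Real.pi) :=
    fun hf => hf.intervalIntegrable _ _
  have hint := intervalIntegral.integral_mono_on Real.two_pi_pos.le (hii (by fun_prop))
    (hii (by fun_prop)) fun φ _ => hpoint φ
  rw [intervalIntegral.integral_add (hii (by fun_prop)) intervalIntegrable_const,
    intervalIntegral.integral_const_mul,
    intervalIntegral.integral_add (hii (by fun_prop)) (hii (by fun_prop)),
    intervalIntegral.integral_finsetSum fun _ _ => hii (by fun_prop)] at hint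
  simp only [integral_abs_inner_exp_ofReal_mul_I, intervalIntegral.integral_const,
    ← Finset.mul_sum, ← dist_eq_norm, norm_mul, norm_I, Complex.norm_two, sub_zero,
    smul_eq_mul] at hint
  linarith

/-- A closed plane curve that winds once around each of the four vertices of a
square of side `2` and stays at distance `≥ 1` from all four vertices has length
at least `2π + 8`. -/
theorem stmt16 (γ : ℝ → ℂ) (hcont : ContinuousOn γ (Icc 0 1)) (hclosed : γ 0 = γ 1)
    (hwind : ∀ i : Fin 4, WindsOnce γ (squareVertices i))
    (hdist : ∀ t ∈ Icc (0:ℝ) 1, ∀ i : Fin 4, 1 ≤ dist (γ t) (squareVertices i)) :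
    ENNReal.ofReal (2 * Real.pi + 8) ≤ eVariationOn γ (Icc 0 1) := by
  refine ENNReal.le_of_forall_pos_le_add fun ε hε _ => ?_
  obtain ⟨N, hN, hgrid⟩ := hcont.exists_unitGrid_dist_lt (ε := ε / (2 * Real.pi)) (by positivity)
  have hlen := two_pi_add_eight_le_sum_dist_unitGrid hclosed hwind hdist hN hgrid
  rw [mul_div_cancel₀ _ Real.two_pi_pos.ne'] at hlen
  calc ENNReal.ofReal (2 * Real.pi + 8)
      ≤ ENNReal.ofReal
          (∑ k ∈ Finset.range N, dist (γ (unitGrid N k)) (γ (unitGrid N (k + 1))) + ε) :=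
        ENNReal.ofReal_le_ofReal hlen
    _ = ∑ k ∈ Finset.range N, edist (γ (unitGrid N k)) (γ (unitGrid N (k + 1))) + ε := by
        rw [ENNReal.ofReal_add (Finset.sum_nonneg fun _ _ => dist_nonneg) ε.coe_nonneg,
          ENNReal.ofReal_sum_of_nonneg fun _ _ => dist_nonneg, ENNReal.ofReal_coe_nnreal]
        simp only [edist_dist]
    _ ≤ eVariationOn γ (Icc 0 1) + ε := by
        gcongr; exact sum_edist_unitGrid_le_eVariationOn γ N
end

section
/- Any continuous path in the space of 4-tuples of points on S¹ that starts at a configuration with dihedral order (1,2,3,4) and ends at one with dihedral order (1,3,2,4) must pass through a non-injective configuration (two of the four points collide). -/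
open Set Metric

/-- The circle `S¹`, as the unit sphere in `ℝ² = ℂ`. -/
abbrev S1 : Type := Metric.sphere (0 : ℂ) 1

/-- `a, b, c` occur counterclockwise (positive orientation determinant); for three
distinct points of the circle this says that `a, b, c` are in counterclockwise
cyclic order around `S¹`. -/
def Ccw (a b c : ℂ) : Prop := 0 < ((starRingEnd ℂ) (b - a) * (c - a)).im

/-- The 4-point configuration `x` induces the dihedral order `(1,2,3,4)`:
traveling around the circle the labels read `1,2,3,4` up to cyclic rotation and
reversal. -/
def DihOrder1234 (x : Fin 4 → S1) : Prop :=
  (Ccw (x 0) (x 1) (x 2) ∧ Ccw (x 0) (x 2) (x 3)) ∨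
  (Ccw (x 0) (x 3) (x 2) ∧ Ccw (x 0) (x 2) (x 1))

/-- The 4-point configuration `x` induces the dihedral order `(1,3,2,4)`. -/
def DihOrder1324 (x : Fin 4 → S1) : Prop :=
  (Ccw (x 0) (x 2) (x 1) ∧ Ccw (x 0) (x 1) (x 3)) ∨
  (Ccw (x 0) (x 3) (x 1) ∧ Ccw (x 0) (x 1) (x 2))

/-! The sign of `orient (x 0) (x 1) (x 2) * orient (x 0) (x 1) (x 3)` records whether the chord
through `x 0` and `x 1` separates `x 2` from `x 3`: it is positive for the dihedral order
`(1,2,3,4)` and negative for `(1,3,2,4)`. It varies continuously along the path, so it vanishes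
at some time, and three points of a circle are collinear only if two of them coincide. -/

open Complex ComplexConjugate

noncomputable def orient (a b c : ℂ) : ℝ := (conj (b - a) * (c - a)).im

theorem ccw_iff_orient_pos {a b c : ℂ} : Ccw a b c ↔ 0 < orient a b c := Iff.rfl

theorem orient_swap (a b c : ℂ) : orient a c b = -orient a b c := by
  simp only [orient, mul_im, conj_re, conj_im, sub_re, sub_im]
  ring

@[simp] theorem orient_self_left (a c : ℂ) : orient a a c = 0 := by simp [orient]

theorem normSq_mul_im_div (z w : ℂ) : normSq w * (z / w).im = (z * conj w).im := by
  rcases eq_or_ne w 0 with rfl | hw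
  · simp
  · rw [div_im, mul_im, conj_re, conj_im]
    field_simp [normSq_pos.2 hw |>.ne']
    ring

section UnitCircle

variable {a b c d : ℂ}

theorem normSq_eq_one_of_norm (ha : ‖a‖ = 1) : normSq a = 1 := by
  rw [normSq_eq_norm_sq, ha, one_pow]

/-- Seen from a point `a` of the unit circle, `b ↦ a / (b - a)` maps the rest of the circle
onto the line `Re z = -1/2`; the orientation of `(a, b, c)` becomes the order of the images. -/
theorem re_div_sub_eq (ha : ‖a‖ = 1) (hb : ‖b‖ = 1) (hba : b ≠ a) :
    (a / (b - a)).re = -(1 / 2) := by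
  have ha' := normSq_eq_one_of_norm ha
  have hb' := normSq_eq_one_of_norm hb
  rw [div_re, ← add_div, div_eq_iff (normSq_pos.2 (sub_ne_zero.2 hba)).ne']
  simp only [normSq_apply, sub_re, sub_im] at *
  linear_combination (-(1 : ℝ) / 2) * ha' + (1 / 2 : ℝ) * hb'

theorem two_mul_orient_eq (ha : ‖a‖ = 1) (hb : ‖b‖ = 1) (hc : ‖c‖ = 1) :
    2 * orient a b c =
      normSq (b - a) * normSq (c - a) * ((a / (c - a)).im - (a / (b - a)).im) := by
  have ha' := normSq_eq_one_of_norm ha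
  have hb' := normSq_eq_one_of_norm hb
  have hc' := normSq_eq_one_of_norm hc
  have key : 2 * orient a b c =
      normSq (b - a) * (a * conj (c - a)).im - normSq (c - a) * (a * conj (b - a)).im := by
    simp only [orient, normSq_apply, mul_im, conj_re, conj_im, sub_re, sub_im] at *
    linear_combination
      (2 * b.im * c.re - 2 * b.re * c.im - a.im * c.re + a.im * b.re + a.re * c.im - a.re * b.im) * ha'
        + (a.re * c.im - a.im * c.re) * hb' + (a.im * b.re - a.re * b.im) * hc'
  rw [key, ← normSq_mul_im_div, ← normSq_mul_im_div]
  ring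

theorem orient_pos_iff (ha : ‖a‖ = 1) (hb : ‖b‖ = 1) (hc : ‖c‖ = 1) (hba : b ≠ a) (hca : c ≠ a) :
    0 < orient a b c ↔ (a / (b - a)).im < (a / (c - a)).im := by
  have hN : 0 < normSq (b - a) * normSq (c - a) :=
    mul_pos (normSq_pos.2 (sub_ne_zero.2 hba)) (normSq_pos.2 (sub_ne_zero.2 hca))
  calc 0 < orient a b c ↔ 0 < 2 * orient a b c := (mul_pos_iff_of_pos_left two_pos).symm
    _ ↔ 0 < normSq (b - a) * normSq (c - a) * ((a / (c - a)).im - (a / (b - a)).im) := by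
      rw [two_mul_orient_eq ha hb hc]
    _ ↔ _ := by rw [mul_pos_iff_of_pos_left hN, sub_pos]

theorem orient_pos_trans (ha : ‖a‖ = 1) (hb : ‖b‖ = 1) (hc : ‖c‖ = 1) (hd : ‖d‖ = 1)
    (habc : 0 < orient a b c) (hacd : 0 < orient a c d) : 0 < orient a b d := by
  have hba : b ≠ a := by rintro rfl; simp at habc
  have hca : c ≠ a := by rintro rfl; simp at hacd
  have hda : d ≠ a := by rintro rfl; rw [orient_swap] at hacd; simp at hacd
  rw [orient_pos_iff ha hb hc hba hca] at habc
  rw [orient_pos_iff ha hc hd hca hda] at hacd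
  rw [orient_pos_iff ha hb hd hba hda]
  exact habc.trans hacd

theorem eq_or_eq_or_eq_of_orient_eq_zero (ha : ‖a‖ = 1) (hb : ‖b‖ = 1) (hc : ‖c‖ = 1)
    (h : orient a b c = 0) : b = a ∨ c = a ∨ b = c := by
  by_cases hba : b = a
  · exact Or.inl hba
  by_cases hca : c = a
  · exact Or.inr (Or.inl hca)
  refine Or.inr (Or.inr ?_)
  have hN : normSq (b - a) * normSq (c - a) ≠ 0 :=
    mul_ne_zero (normSq_pos.2 (sub_ne_zero.2 hba)).ne' (normSq_pos.2 (sub_ne_zero.2 hca)).ne'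
  have him : (a / (b - a)).im = (a / (c - a)).im := by
    have := two_mul_orient_eq ha hb hc
    rw [h, mul_zero, eq_comm, mul_eq_zero, or_iff_right hN, sub_eq_zero] at this
    exact this.symm
  have hdiv : a / (b - a) = a / (c - a) :=
    Complex.ext (by rw [re_div_sub_eq ha hb hba, re_div_sub_eq ha hc hca]) him
  have ha0 : a ≠ 0 := by rintro rfl; simp at ha
  rw [div_eq_mul_inv, div_eq_mul_inv, mul_right_inj' ha0, inv_inj, sub_left_inj] at hdiv
  exact hdiv

end UnitCircle

section Configuration

noncomputable def chordSide (x : Fin 4 → S1) : ℝ :=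
  orient (x 0) (x 1) (x 2) * orient (x 0) (x 1) (x 3)

theorem continuous_chordSide : Continuous chordSide := by
  unfold chordSide orient
  fun_prop

variable {x : Fin 4 → S1}

theorem DihOrder1234.chordSide_pos (h : DihOrder1234 x) : 0 < chordSide x := by
  have hx := fun i => norm_eq_of_mem_sphere (x i)
  simp only [DihOrder1234, ccw_iff_orient_pos] at h
  rcases h with ⟨h012, h023⟩ | ⟨h032, h021⟩
  · exact mul_pos h012 (orient_pos_trans (hx 0) (hx 1) (hx 2) (hx 3) h012 h023)
  · have h031 := orient_pos_trans (hx 0) (hx 3) (hx 2) (hx 1) h032 h021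
    rw [orient_swap] at h021 h031
    exact mul_pos_of_neg_of_neg (neg_pos.1 h021) (neg_pos.1 h031)

theorem DihOrder1324.chordSide_neg (h : DihOrder1324 x) : chordSide x < 0 := by
  simp only [DihOrder1324, ccw_iff_orient_pos] at h
  rcases h with ⟨h021, h013⟩ | ⟨h031, h012⟩
  · rw [orient_swap] at h021
    exact mul_neg_of_neg_of_pos (neg_pos.1 h021) h013
  · rw [orient_swap] at h031
    exact mul_neg_of_pos_of_neg h012 (neg_pos.1 h031)

theorem exists_ne_eq_of_chordSide_eq_zero (h : chordSide x = 0) :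
    ∃ i j : Fin 4, i ≠ j ∧ x i = x j := by
  have hx := fun i => norm_eq_of_mem_sphere (x i)
  rcases mul_eq_zero.1 h with h | h
  · rcases eq_or_eq_or_eq_of_orient_eq_zero (hx 0) (hx 1) (hx 2) h with h' | h' | h'
    · exact ⟨1, 0, by decide, Subtype.ext h'⟩
    · exact ⟨2, 0, by decide, Subtype.ext h'⟩
    · exact ⟨1, 2, by decide, Subtype.ext h'⟩
  · rcases eq_or_eq_or_eq_of_orient_eq_zero (hx 0) (hx 1) (hx 3) h with h' | h' | h'
    · exact ⟨1, 0, by decide, Subtype.ext h'⟩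
    · exact ⟨3, 0, by decide, Subtype.ext h'⟩
    · exact ⟨1, 3, by decide, Subtype.ext h'⟩

end Configuration

theorem stmt19_general (H : unitInterval → Fin 4 → S1) (hH : Continuous H)
    (h0 : DihOrder1234 (H 0)) (h1 : DihOrder1324 (H 1)) :
    ∃ t : unitInterval, ∃ i j : Fin 4, i ≠ j ∧ H t i = H t j := by
  obtain ⟨t, ht⟩ := intermediate_value_univ 1 0 (continuous_chordSide.comp hH)
    ⟨h1.chordSide_neg.le, h0.chordSide_pos.le⟩
  exact ⟨t, exists_ne_eq_of_chordSide_eq_zero ht⟩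

/-- Any continuous path in the space of 4-tuples of points on `S¹` starting at an
injective configuration with dihedral order `(1,2,3,4)` and ending at an injective
configuration with dihedral order `(1,3,2,4)` must pass through a non-injective
configuration: at some time two of the four points collide. -/
theorem stmt19 (H : unitInterval → Fin 4 → S1) (hH : Continuous H)
    (h0inj : Function.Injective (H 0)) (h1inj : Function.Injective (H 1))
    (h0 : DihOrder1234 (H 0)) (h1 : DihOrder1324 (H 1)) :
    ∃ t : unitInterval, ∃ i j : Fin 4, i ≠ j ∧ H t i = H t j :=
  stmt19_general H hH h0 h1
end
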